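/- Let T be the n×n tridiagonal Toeplitz matrix with 1 on the diagonal, -u on the superdiagonal, and -l on the subdiagonal, where 4lu < 1, lu ≠ 0. With λ± = (1 ± √(1−4lu))/2, the matrix with entries (T^{-1})_{ij} = u^{j-i} (λ₊^i − λ₋^i)(λ₊^{n-j+1} − λ₋^{n-j+1}) / ((λ₊ − λ₋)(λ₊^{n+1} − λ₋^{n+1})) for i ≤ j, and (T^{-1})_{ij} = l^{i-j} (λ₊^j − λ₋^j)(λ₊^{n-i+1} − λ₋^{n-i+1}) / ((λ₊ − λ₋)(λ₊^{n+1} − λ₋^{n+1})) for i ≥ j, is the inverse of T. -/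

import Mathlib

/-!
Write `p, q` for `λ₊, λ₋`, so `p + q = 1` and `p q = l u`, and `F k = p ^ k - q ^ k`; then
`F 0 = 0` and `F (k + 2) = F (k + 1) - l u F k`. With rows and columns numbered from `1`, the
numerator `G a b` of the claimed inverse makes sense for all `a, b : ℕ` and vanishes at `a = 0` and
`a = n + 1`, so row `a` of `T G` is `G a b - u G (a + 1) b - l G (a - 1) b` with no boundary cases.
Off the diagonal this is a multiple of the recurrence for `F`; on the diagonal it is the addition
formula `F a F (m + 1) - p q F (a - 1) F m = (p - q) F (a + m)`, which yields `(p - q) F (n + 1)`.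
That denominator is nonzero because `|q| < p`.
-/

open Finset

section PowDiff

variable {R : Type*} [CommRing R] (p q : R)

def powDiff (k : ℕ) : R := p ^ k - q ^ k

@[simp] lemma powDiff_zero : powDiff p q 0 = 0 := by simp [powDiff]

lemma powDiff_add_two (k : ℕ) :
    powDiff p q (k + 2) = (p + q) * powDiff p q (k + 1) - p * q * powDiff p q k := by
  simp only [powDiff]; ring

lemma sub_mul_powDiff_add_add_one (a m : ℕ) :
    (p - q) * powDiff p q (a + m + 1)
      = powDiff p q (a + 1) * powDiff p q (m + 1) - p * q * powDiff p q a * powDiff p q m := by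
  simp only [powDiff]; ring

end PowDiff

lemma powDiff_succ_pos {R : Type*} [CommRing R] [LinearOrder R]
    [IsStrictOrderedRing R] {p q : R} (h : |q| < p) (k : ℕ) : 0 < powDiff p q (k + 1) := by
  have hq : q ^ (k + 1) ≤ |q| ^ (k + 1) := by rw [← abs_pow]; exact le_abs_self _
  have hp : |q| ^ (k + 1) < p ^ (k + 1) := pow_lt_pow_left₀ h (abs_nonneg q) k.succ_ne_zero
  rw [powDiff]; linarith

section Tridiag

variable {R : Type*} [CommRing R] (n : ℕ) (l u p q : R)

def tridiagToeplitz : Matrix (Fin n) (Fin n) R :=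
  Matrix.of fun i j =>
    if i = j then 1 else if (j : ℕ) = i + 1 then -u else if (i : ℕ) = j + 1 then -l else 0

lemma sum_tridiagToeplitz_mul (v : ℕ → R) (h0 : v 0 = 0) (hn : v (n + 1) = 0) (i : Fin n) :
    ∑ k : Fin n, tridiagToeplitz n l u i k * v (k + 1) = v (i + 1) - u * v (i + 2) - l * v i := by
  have hterm : ∀ k : Fin n, tridiagToeplitz n l u i k * v (k + 1) =
      (if (i : ℕ) = k then v (k + 1) else 0) + (if (i : ℕ) + 1 = k then -u * v (k + 1) else 0)
        + (if (i : ℕ) = k + 1 then -l * v (k + 1) else 0) := by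
    intro k
    simp only [tridiagToeplitz, Matrix.of_apply, Fin.ext_iff]
    split_ifs <;> first | omega | ring
  simp only [hterm, sum_add_distrib]
  rw [Fin.sum_univ_eq_sum_range (fun k => if (i : ℕ) = k then v (k + 1) else 0),
    Fin.sum_univ_eq_sum_range (fun k => if (i : ℕ) + 1 = k then -u * v (k + 1) else 0),
    Fin.sum_univ_eq_sum_range (fun k => if (i : ℕ) = k + 1 then -l * v (k + 1) else 0),
    sum_ite_eq, sum_ite_eq]
  have hlast : (if (i : ℕ) + 1 ∈ range n then -u * v (i + 1 + 1) else 0) = -u * v (i + 2) := by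
    split_ifs with h
    · rfl
    · rw [show (i : ℕ) + 2 = n + 1 by simp at h; omega, hn, mul_zero]
  have hfirst : ∑ k ∈ range n, (if (i : ℕ) = k + 1 then -l * v (k + 1) else 0) = -l * v i := by
    obtain ⟨_ | j, hj⟩ := i
    · simp [h0]
    · simp [show j < n by omega]
  rw [if_pos (mem_range.2 i.isLt), hlast, hfirst]
  ring

/-- Indices are `1`-based: the inverse has entry `tridiagKernel (i + 1) (j + 1)` at `(i, j)`. -/
def tridiagKernel (a b : ℕ) : R :=
  if a ≤ b then u ^ (b - a) * powDiff p q a * powDiff p q (n + 1 - b)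
  else l ^ (a - b) * powDiff p q b * powDiff p q (n + 1 - a)

lemma tridiagKernel_of_le {a b : ℕ} (h : a ≤ b) :
    tridiagKernel n l u p q a b = u ^ (b - a) * powDiff p q a * powDiff p q (n + 1 - b) :=
  if_pos h

lemma tridiagKernel_of_ge {a b : ℕ} (h : b ≤ a) :
    tridiagKernel n l u p q a b = l ^ (a - b) * powDiff p q b * powDiff p q (n + 1 - a) := by
  rcases h.eq_or_lt with rfl | h
  · simp [tridiagKernel]
  · exact if_neg (not_le.2 h)

lemma tridiagKernel_row (hsum : p + q = 1) (hprod : p * q = l * u) {a : ℕ} (ha : a < n) (b : ℕ) :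
    tridiagKernel n l u p q (a + 1) b - u * tridiagKernel n l u p q (a + 2) b
        - l * tridiagKernel n l u p q a b
      = if a + 1 = b then (p - q) * powDiff p q (n + 1) else 0 := by
  have hrec (k : ℕ) : powDiff p q (k + 2) = powDiff p q (k + 1) - l * u * powDiff p q k := by
    rw [powDiff_add_two, hsum, hprod, one_mul]
  obtain ⟨m, rfl⟩ : ∃ m, n = a + 1 + m := ⟨n - (a + 1), by omega⟩
  rcases lt_trichotomy (a + 1) b with hlt | rfl | hgt
  · obtain ⟨d, rfl⟩ : ∃ d, b = a + 2 + d := ⟨b - (a + 2), by omega⟩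
    rw [tridiagKernel_of_le _ _ _ _ _ (by omega), tridiagKernel_of_le _ _ _ _ _ (by omega),
      tridiagKernel_of_le _ _ _ _ _ (by omega), if_neg (by omega),
      show a + 2 + d - (a + 1) = d + 1 by omega, show a + 2 + d - (a + 2) = d by omega,
      show a + 2 + d - a = d + 2 by omega]
    linear_combination (-u ^ (d + 1) * powDiff p q (a + 1 + m + 1 - (a + 2 + d))) * hrec a
  · rw [tridiagKernel_of_le _ _ _ _ _ le_rfl, tridiagKernel_of_ge _ _ _ _ _ (by omega),
      tridiagKernel_of_le _ _ _ _ _ (by omega), if_pos rfl, Nat.sub_self, Nat.add_sub_cancel_left,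
      show a + 2 - (a + 1) = 1 by omega, show a + 1 + m + 1 - (a + 1) = m + 1 by omega,
      show a + 1 + m + 1 - (a + 2) = m by omega, show a + 1 + m + 1 = a + (m + 1) + 1 by omega,
      sub_mul_powDiff_add_add_one, hprod]
    linear_combination (-powDiff p q (a + 1)) * hrec m
  · obtain ⟨d, rfl⟩ : ∃ d, a = b + d := ⟨a - b, by omega⟩
    rw [tridiagKernel_of_ge _ _ _ _ _ (by omega), tridiagKernel_of_ge _ _ _ _ _ (by omega),
      tridiagKernel_of_ge _ _ _ _ _ (by omega), if_neg (by omega),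
      show b + d + 1 - b = d + 1 by omega, show b + d + 2 - b = d + 2 by omega,
      show b + d - b = d by omega, show b + d + 1 + m + 1 - (b + d + 1) = m + 1 by omega,
      show b + d + 1 + m + 1 - (b + d + 2) = m by omega,
      show b + d + 1 + m + 1 - (b + d) = m + 2 by omega]
    linear_combination (-l ^ (d + 1) * powDiff p q b) * hrec m

end Tridiag

section Inverse

variable {K : Type*} [Field K] (n : ℕ) (l u p q : K)

def tridiagToeplitzInv : Matrix (Fin n) (Fin n) K :=
  Matrix.of fun i j =>
    tridiagKernel n l u p q (i + 1) (j + 1) / ((p - q) * powDiff p q (n + 1))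

theorem tridiagToeplitz_mul_tridiagToeplitzInv (hsum : p + q = 1) (hprod : p * q = l * u)
    (hD : (p - q) * powDiff p q (n + 1) ≠ 0) :
    tridiagToeplitz n l u * tridiagToeplitzInv n l u p q = 1 := by
  ext i j
  have h0 : tridiagKernel n l u p q 0 (j + 1) = 0 := by
    simp [tridiagKernel_of_le]
  have hn : tridiagKernel n l u p q (n + 1) (j + 1) = 0 := by
    simp [tridiagKernel_of_ge n l u p q (show (j : ℕ) + 1 ≤ n + 1 by omega)]
  rw [Matrix.mul_apply, Matrix.one_apply]
  simp only [tridiagToeplitzInv, Matrix.of_apply]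
  rw [sum_tridiagToeplitz_mul n l u (fun a => tridiagKernel n l u p q a (j + 1) / _)
    (by simp [h0]) (by simp [hn]), mul_div_assoc', mul_div_assoc', ← sub_div, ← sub_div,
    tridiagKernel_row n l u p q hsum hprod i.isLt]
  simp only [Nat.add_right_cancel_iff, Fin.val_inj]
  split_ifs
  · exact div_self hD
  · exact zero_div _

end Inverse

theorem toeplitz_tridiagonal_inverse_general (n : ℕ) (l u : ℝ)
    (hlu4 : 4 * l * u < 1)
    (lp lm : ℝ)
    (hlp : lp = (1 + Real.sqrt (1 - 4 * l * u)) / 2)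
    (hlm : lm = (1 - Real.sqrt (1 - 4 * l * u)) / 2)
    (T : Matrix (Fin n) (Fin n) ℝ)
    (hT : ∀ i j : Fin n, T i j =
      if i = j then 1
      else if (j : ℕ) = (i : ℕ) + 1 then -u
      else if (i : ℕ) = (j : ℕ) + 1 then -l
      else 0)
    (M : Matrix (Fin n) (Fin n) ℝ)
    (hM : ∀ i j : Fin n, M i j =
      if (i : ℕ) ≤ (j : ℕ) then
        u ^ ((j : ℕ) - (i : ℕ)) * (lp ^ ((i : ℕ) + 1) - lm ^ ((i : ℕ) + 1))
          * (lp ^ (n - (j : ℕ))- lm ^ (n - (j : ℕ)))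
          / ((lp - lm) * (lp ^ (n + 1) - lm ^ (n + 1)))
      else
        l ^ ((i : ℕ) - (j : ℕ)) * (lp ^ ((j : ℕ) + 1) - lm ^ ((j : ℕ) + 1))
          * (lp ^ (n - (i : ℕ)) - lm ^ (n - (i : ℕ)))
          / ((lp - lm) * (lp ^ (n + 1) - lm ^ (n + 1)))) :
    T * M = 1 ∧ M * T = 1 := by
  have hdisc : 0 < 1 - 4 * l * u := by linarith
  have hsqrt : 0 < Real.sqrt (1 - 4 * l * u) := Real.sqrt_pos.2 hdisc
  have hsum : lp + lm = 1 := by rw [hlp, hlm]; ring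
  have hprod : lp * lm = l * u := by
    rw [hlp, hlm]; linear_combination (-1 / 4 : ℝ) * Real.sq_sqrt hdisc.le
  have hdom : |lm| < lp := abs_lt.2 ⟨by linarith, by linarith⟩
  have hD : (lp - lm) * powDiff lp lm (n + 1) ≠ 0 :=
    (mul_pos (by linarith) (powDiff_succ_pos hdom n)).ne'
  obtain rfl : T = tridiagToeplitz n l u := Matrix.ext hT
  obtain rfl : M = tridiagToeplitzInv n l u lp lm := by
    ext i j
    rw [hM]
    simp only [tridiagToeplitzInv, Matrix.of_apply, tridiagKernel, powDiff, Nat.add_sub_add_right,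
      Nat.add_le_add_iff_right]
    split_ifs <;> rfl
  have hinv := tridiagToeplitz_mul_tridiagToeplitzInv n l u lp lm hsum hprod hD
  exact ⟨hinv, mul_eq_one_comm.mp hinv⟩

theorem toeplitz_tridiagonal_inverse (n : ℕ) (hn : 1 ≤ n) (l u : ℝ)
    (hlu : l * u ≠ 0) (hlu4 : 4 * l * u < 1)
    (lp lm : ℝ)
    (hlp : lp = (1 + Real.sqrt (1 - 4 * l * u)) / 2)
    (hlm : lm = (1 - Real.sqrt (1 - 4 * l * u)) / 2)
    (T : Matrix (Fin n) (Fin n) ℝ)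
    (hT : ∀ i j : Fin n, T i j =
      if i = j then 1
      else if (j : ℕ) = (i : ℕ) + 1 then -u
      else if (i : ℕ) = (j : ℕ) + 1 then -l
      else 0)
    (M : Matrix (Fin n) (Fin n) ℝ)
    (hM : ∀ i j : Fin n, M i j =
      if (i : ℕ) ≤ (j : ℕ) then
        u ^ ((j : ℕ) - (i : ℕ)) * (lp ^ ((i : ℕ) + 1) - lm ^ ((i : ℕ) + 1))
          * (lp ^ (n - (j : ℕ))- lm ^ (n - (j : ℕ)))
          / ((lp - lm) * (lp ^ (n + 1) - lm ^ (n + 1)))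
      else
        l ^ ((i : ℕ) - (j : ℕ)) * (lp ^ ((j : ℕ) + 1) - lm ^ ((j : ℕ) + 1))
          * (lp ^ (n - (i : ℕ)) - lm ^ (n - (i : ℕ)))
          / ((lp - lm) * (lp ^ (n + 1) - lm ^ (n + 1)))) :
    T * M = 1 ∧ M * T = 1 :=
  toeplitz_tridiagonal_inverse_general n l u hlu4 lp lm hlp hlm T hT M hM
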